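/- Let γ = [[a,b],[c,d]] ∈ SL₂(ℂ)\SU₂(ℂ) with |a|²+|c|² ≠ 1. Then the bisector Σ_γ in ℍ³ of the geodesic segment from j to γ⁻¹(j) is a Euclidean hemisphere with center P_γ = −(āb+c̄d)/(|a|²+|c|²−1) ∈ ∂ℍ³ = ℂ and radius R_γ given by R_γ² = (1+‖P_γ‖²)/(|a|²+|c|²); equivalently, j and γ⁻¹(j) are inverse points with respect to the sphere of center P_γ and radius R_γ. -/

import Mathlib

/-! With `t = |a|² + |c|²` (positive, as `det γ = 1`), the point `γ⁻¹(j) = w/t + (1/t) j` is the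
image of `j` under the homothety of centre `P_γ = w/(t - 1) ∈ ℂ` and ratio `1/t`. For a point `p₀`
and its image `p₁` under this homothety, expanding squares gives
`|u - p₀|² - t |u - p₁|² = (1 - t) (|u - P_γ|² - |p₀ - P_γ|² / t)`,
and since `cosh ρ(p, u) = 1 + |p - u|² / (2 h(p) h(u))` with `h(p₁) = h(p₀) / t`, the bisector of
`p₀, p₁` is the hemisphere `|u - P_γ|² = |p₀ - P_γ|² / t`. Inversion holds because
`|p₁ - P_γ| = |p₀ - P_γ| / t`. -/

/-- `‖γ‖²`, the sum of the squared moduli of the entries of `γ`. -/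
noncomputable def mnorm (γ : Matrix (Fin 2) (Fin 2) ℂ) : ℝ :=
  Complex.normSq (γ 0 0) + Complex.normSq (γ 0 1) + Complex.normSq (γ 1 0) + Complex.normSq (γ 1 1)

/-- `δ(P,P') = cosh ρ(P,P') = 1 + d(P,P')²/(2rr')` for points `P = z+rj`, `P' = z'+r'j` of `ℍ³`,
`d` being the Euclidean distance. -/
noncomputable def δH (z : ℂ) (r : ℝ) (z' : ℂ) (r' : ℝ) : ℝ :=
  1 + (Complex.normSq (z - z') + (r - r') ^ 2) / (2 * r * r')

open Complex

noncomputable def sqDist (z : ℂ) (r : ℝ) (z' : ℂ) (r' : ℝ) : ℝ :=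
  normSq (z - z') + (r - r') ^ 2

lemma δH_eq_iff_sqDist_eq (z₀ z₁ z : ℂ) {r₀ r₁ r : ℝ} (hr₀ : r₀ ≠ 0) (hr₁ : r₁ ≠ 0) (hr : r ≠ 0) :
    δH z₀ r₀ z r = δH z₁ r₁ z r ↔ r₁ * sqDist z₀ r₀ z r = r₀ * sqDist z₁ r₁ z r := by
  unfold δH sqDist
  rw [add_right_inj, div_eq_div_iff (by positivity) (by positivity)]
  constructor <;> intro h
  · exact mul_left_cancel₀ (by positivity : 2 * r ≠ 0) (by linear_combination h)
  · linear_combination 2 * r * h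

lemma sqDist_sub_mul_sqDist_homothety (P z₀ z : ℂ) (r₀ r : ℝ) {t : ℝ} (ht : t ≠ 0) :
    sqDist z₀ r₀ z r - t * sqDist (P + (z₀ - P) / t) (r₀ / t) z r =
      (1 - t) * (sqDist z r P 0 - sqDist z₀ r₀ P 0 / t) := by
  simp only [sqDist, normSq_apply, sub_re, sub_im, add_re, add_im, div_ofReal_re, div_ofReal_im]
  field_simp
  ring

lemma sqDist_homothety (P z₀ : ℂ) (r₀ : ℝ) {t : ℝ} (ht : t ≠ 0) :
    sqDist (P + (z₀ - P) / t) (r₀ / t) P 0 = sqDist z₀ r₀ P 0 / t ^ 2 := by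
  simp only [sqDist, normSq_apply, sub_re, sub_im, add_re, add_im, div_ofReal_re, div_ofReal_im]
  field_simp
  ring

lemma δH_eq_δH_homothety_iff (P z₀ z : ℂ) {r₀ r t : ℝ} (hr₀ : 0 < r₀) (hr : 0 < r) (ht : 0 < t)
    (ht₁ : t ≠ 1) :
    δH z₀ r₀ z r = δH (P + (z₀ - P) / t) (r₀ / t) z r ↔ sqDist z r P 0 = sqDist z₀ r₀ P 0 / t := by
  have key := sqDist_sub_mul_sqDist_homothety P z₀ z r₀ r ht.ne'
  rw [δH_eq_iff_sqDist_eq _ _ _ hr₀.ne' (by positivity) hr.ne', div_mul_comm, mul_comm r₀,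
    mul_left_inj' hr₀.ne', div_eq_iff ht.ne', ← sub_eq_zero, mul_comm, key,
    mul_eq_zero_iff_left (sub_ne_zero.mpr ht₁.symm), sub_eq_zero]

lemma sqrt_sqDist_mul_sqrt_sqDist_homothety (P z₀ : ℂ) (r₀ : ℝ) {t : ℝ} (ht : 0 < t) :
    √(sqDist z₀ r₀ P 0) * √(sqDist (P + (z₀ - P) / t) (r₀ / t) P 0) = sqDist z₀ r₀ P 0 / t := by
  have hX : 0 ≤ sqDist z₀ r₀ P 0 := add_nonneg (normSq_nonneg _) (sq_nonneg _)
  rw [sqDist_homothety P z₀ r₀ ht.ne', ← Real.sqrt_mul hX, ← Real.sqrt_sq (div_nonneg hX ht.le)]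
  congr 1
  field_simp

lemma normSq_add_normSq_pos_of_det_eq_one {a b c d : ℂ} (hdet : a * d - b * c = 1) :
    0 < normSq a + normSq c := by
  by_contra! h
  have ha : a = 0 := normSq_eq_zero.mp (by linarith [normSq_nonneg a, normSq_nonneg c])
  have hc : c = 0 := normSq_eq_zero.mp (by linarith [normSq_nonneg a, normSq_nonneg c])
  simp [ha, hc] at hdet

theorem stmt11_general (a b c d : ℂ) (hdet : a * d - b * c = 1)
    (h1 : Complex.normSq a + Complex.normSq c ≠ 1) :
    (∀ (z : ℂ) (r : ℝ), 0 < r →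
      (δH 0 1 z r =
        δH (-((starRingEnd ℂ) a * b + (starRingEnd ℂ) c * d) /
              ((Complex.normSq a + Complex.normSq c : ℝ) : ℂ))
           ((Complex.normSq a + Complex.normSq c)⁻¹) z r ↔
        Complex.normSq
            (z - -((starRingEnd ℂ) a * b + (starRingEnd ℂ) c * d) /
              ((Complex.normSq a + Complex.normSq c - 1 : ℝ) : ℂ)) + r ^ 2 =
          (1 + Complex.normSq (-((starRingEnd ℂ) a * b + (starRingEnd ℂ) c * d) /
              ((Complex.normSq a + Complex.normSq c - 1 : ℝ) : ℂ))) /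
            (Complex.normSq a + Complex.normSq c))) ∧
    Real.sqrt (Complex.normSq
        (0 - -((starRingEnd ℂ) a * b + (starRingEnd ℂ) c * d) /
          ((Complex.normSq a + Complex.normSq c - 1 : ℝ) : ℂ)) + 1 ^ 2) *
      Real.sqrt (Complex.normSq
        (-((starRingEnd ℂ) a * b + (starRingEnd ℂ) c * d) /
            ((Complex.normSq a + Complex.normSq c : ℝ) : ℂ) -
          -((starRingEnd ℂ) a * b + (starRingEnd ℂ) c * d) /
            ((Complex.normSq a + Complex.normSq c - 1 : ℝ) : ℂ)) +
        ((Complex.normSq a + Complex.normSq c)⁻¹) ^ 2) =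
      (1 + Complex.normSq (-((starRingEnd ℂ) a * b + (starRingEnd ℂ) c * d) /
          ((Complex.normSq a + Complex.normSq c - 1 : ℝ) : ℂ))) /
        (Complex.normSq a + Complex.normSq c) := by
  have ht := normSq_add_normSq_pos_of_det_eq_one hdet
  set t := normSq a + normSq c
  set w := -((starRingEnd ℂ) a * b + (starRingEnd ℂ) c * d)
  set P := w / ((t - 1 : ℝ) : ℂ)
  have hγj : w / (t : ℂ) = P + (0 - P) / t := by
    have : ((t - 1 : ℝ) : ℂ) ≠ 0 := ofReal_ne_zero.mpr (sub_ne_zero.mpr h1)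
    have : (t : ℂ) ≠ 0 := ofReal_ne_zero.mpr ht.ne'
    simp only [P]
    field_simp
    push_cast
    ring
  have hj : sqDist 0 1 P 0 = 1 + normSq P := by simp [sqDist, add_comm]
  rw [← hj, hγj, inv_eq_one_div]
  refine ⟨fun z r hr => ?_, ?_⟩
  · rw [δH_eq_δH_homothety_iff P 0 z one_pos hr ht h1]
    simp [sqDist]
  · simpa only [sqDist, sub_zero] using sqrt_sqDist_mul_sqrt_sqDist_homothety P 0 1 ht

/-- For `γ = [[a,b],[c,d]] ∈ SL₂(ℂ)\SU₂(ℂ)` with `|a|²+|c|² ≠ 1`, the bisector `Σ_γ` in `ℍ³`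
of the geodesic segment from `j` to `γ⁻¹(j) = −(āb+c̄d)/(|a|²+|c|²) + (1/(|a|²+|c|²))j`
is the Euclidean hemisphere with center `P_γ = −(āb+c̄d)/(|a|²+|c|²−1) ∈ ℂ` and radius `R_γ`
with `R_γ² = (1+‖P_γ‖²)/(|a|²+|c|²)`; equivalently, `j` and `γ⁻¹(j)` are inverse points with
respect to the sphere of center `P_γ` and radius `R_γ`. -/
theorem stmt11 (a b c d : ℂ) (hdet : a * d - b * c = 1)
    (hsu : mnorm !![a, b; c, d] ≠ 2)
    (h1 : Complex.normSq a + Complex.normSq c ≠ 1) :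
    (∀ (z : ℂ) (r : ℝ), 0 < r →
      (δH 0 1 z r =
        δH (-((starRingEnd ℂ) a * b + (starRingEnd ℂ) c * d) /
              ((Complex.normSq a + Complex.normSq c : ℝ) : ℂ))
           ((Complex.normSq a + Complex.normSq c)⁻¹) z r ↔
        Complex.normSq
            (z - -((starRingEnd ℂ) a * b + (starRingEnd ℂ) c * d) /
              ((Complex.normSq a + Complex.normSq c - 1 : ℝ) : ℂ)) + r ^ 2 =
          (1 + Complex.normSq (-((starRingEnd ℂ) a * b + (starRingEnd ℂ) c * d) /
              ((Complex.normSq a + Complex.normSq c - 1 : ℝ) : ℂ))) /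
            (Complex.normSq a + Complex.normSq c))) ∧
    Real.sqrt (Complex.normSq
        (0 - -((starRingEnd ℂ) a * b + (starRingEnd ℂ) c * d) /
          ((Complex.normSq a + Complex.normSq c - 1 : ℝ) : ℂ)) + 1 ^ 2) *
      Real.sqrt (Complex.normSq
        (-((starRingEnd ℂ) a * b + (starRingEnd ℂ) c * d) /
            ((Complex.normSq a + Complex.normSq c : ℝ) : ℂ) -
          -((starRingEnd ℂ) a * b + (starRingEnd ℂ) c * d) /
            ((Complex.normSq a + Complex.normSq c - 1 : ℝ) : ℂ)) +
        ((Complex.normSq a + Complex.normSq c)⁻¹) ^ 2) =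
      (1 + Complex.normSq (-((starRingEnd ℂ) a * b + (starRingEnd ℂ) c * d) /
          ((Complex.normSq a + Complex.normSq c - 1 : ℝ) : ℂ))) /
        (Complex.normSq a + Complex.normSq c) :=
  stmt11_general a b c d hdet h1
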